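/- Let 𝒢 be a graph product of cyclic groups, x, y, z distinct vertices with x ≤_∞ y and x ≤_∞ z (so the transvections R_x^y, R_x^z exist, o(x) = ∞), and let v be a vertex distinct from x, y, z with o(v) the order of v. Suppose R_x^{[y,z]} = [R_x^y, R_x^z] and the partial conjugation π^v_C do not commute in Out(𝒢), where C is a union of components of Γ \ st(v). Then (v, y, z | x) is a STIL: x lies in a component of Γ \ (lk(v) ∩ lk(y) ∩ lk(z)) containing none of v, y, z, and ⟨v, y, z⟩ is not virtually abelian. -/

import Mathlib

variable {V : Type*} [Fintype V]

/-- The star of a vertex: the vertex together with its link (neighbor set). -/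
def stS (Γ : SimpleGraph V) (v : V) : Set V := insert v (Γ.neighborSet v)

/-- The pre-order `u ≤ v` iff `lk(u) ⊆ st(v)`. -/
def leD (Γ : SimpleGraph V) (u v : V) : Prop := Γ.neighborSet u ⊆ stS Γ v

/-- `u` and `v` are equivalent: `u ≤ v` and `v ≤ u`. -/
def equivD (Γ : SimpleGraph V) (u v : V) : Prop := leD Γ u v ∧ leD Γ v u

/-- The graph `Γ \ S`: edges of `Γ` between vertices outside `S`.
Reachability in this graph expresses "lying in the same connected component of `Γ \ S`". -/
def avoidG (Γ : SimpleGraph V) (S : Set V) : SimpleGraph V where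
  Adj a b := Γ.Adj a b ∧ a ∉ S ∧ b ∉ S
  symm := ⟨by rintro a b ⟨h, ha, hb⟩; exact ⟨h.symm, hb, ha⟩⟩
  loopless := ⟨by rintro a ⟨h, _, _⟩; exact Γ.irrefl h⟩

/-- Relators for the graph product of cyclic groups over the labeled graph `(Γ, o)`:
commutators of adjacent generators, and `v ^ o v` for finite-order vertices
(`o v = 0` means the vertex group is infinite cyclic). -/
def gpRels (Γ : SimpleGraph V) (o : V → ℕ) : Set (FreeGroup V) :=
  {r | (∃ u v, Γ.Adj u v ∧
          r = FreeGroup.of u * FreeGroup.of v * (FreeGroup.of u)⁻¹ * (FreeGroup.of v)⁻¹) ∨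
       ∃ v, o v ≠ 0 ∧ r = FreeGroup.of v ^ (o v)}

/-- The graph product of cyclic groups `ℤ/o(v)` over `(Γ, o)` (`o v = 0` meaning `ℤ`). -/
abbrev GP (Γ : SimpleGraph V) (o : V → ℕ) : Type _ := PresentedGroup (gpRels Γ o)

/-- The generator of the graph product corresponding to a vertex. -/
def gen (Γ : SimpleGraph V) (o : V → ℕ) (v : V) : GP Γ o := PresentedGroup.of v

/-- `φ` is the transvection `R_u^{v^k} : u ↦ u·v^k`, fixing all other vertex generators. -/
def IsTransv (Γ : SimpleGraph V) (o : V → ℕ) (φ : MulAut (GP Γ o)) (u v : V) (k : ℤ) : Prop :=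
  φ (gen Γ o u) = gen Γ o u * gen Γ o v ^ k ∧ ∀ w, w ≠ u → φ (gen Γ o w) = gen Γ o w

/-- `φ` is the partial conjugation `π^v_C`, sending each generator `z ∈ C` to `v z v⁻¹`
and fixing all other vertex generators. -/
def IsPC (Γ : SimpleGraph V) (o : V → ℕ) (φ : MulAut (GP Γ o)) (v : V) (C : Set V) : Prop :=
  (∀ z ∈ C, φ (gen Γ o z) = gen Γ o v * gen Γ o z * (gen Γ o v)⁻¹) ∧
  ∀ z ∉ C, φ (gen Γ o z) = gen Γ o z

/-- `C` is a union of connected components of `Γ \ st(v)`. -/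
def IsUnionComponents (Γ : SimpleGraph V) (v : V) (C : Set V) : Prop :=
  C ∩ stS Γ v = ∅ ∧ ∀ a b, Γ.Adj a b → a ∈ C → b ∉ stS Γ v → b ∈ C

/-- `(x, y | w)` is a SIL: `x, y` are non-adjacent and `w` lies in a connected component of
`Γ \ (lk(x) ∩ lk(y))` containing neither `x` nor `y`. -/
def IsSIL (Γ : SimpleGraph V) (x y w : V) : Prop :=
  x ≠ y ∧ ¬ Γ.Adj x y ∧ w ∉ (Γ.neighborSet x ∩ Γ.neighborSet y) ∧
  ¬ (avoidG Γ (Γ.neighborSet x ∩ Γ.neighborSet y)).Reachable w x ∧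
  ¬ (avoidG Γ (Γ.neighborSet x ∩ Γ.neighborSet y)).Reachable w y

/-- A group is virtually abelian if it has a finite-index abelian subgroup. -/
def VirtuallyAbelian (G : Type*) [Group G] : Prop :=
  ∃ H : Subgroup G, H.FiniteIndex ∧ ∀ a ∈ H, ∀ b ∈ H, a * b = b * a

/-- `(x, y, z | w)` is a STIL: the special subgroup `⟨x, y, z⟩` of the graph product is not
virtually abelian, and `w` lies in a connected component of `Γ \ (lk(x) ∩ lk(y) ∩ lk(z))`
containing none of `x`, `y`, `z`. -/
def IsSTIL (Γ : SimpleGraph V) (o : V → ℕ) (x y z w : V) : Prop :=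
  ¬ VirtuallyAbelian ↥(Subgroup.closure {gen Γ o x, gen Γ o y, gen Γ o z}) ∧
  w ∉ (Γ.neighborSet x ∩ Γ.neighborSet y ∩ Γ.neighborSet z) ∧
  ¬ (avoidG Γ (Γ.neighborSet x ∩ Γ.neighborSet y ∩ Γ.neighborSet z)).Reachable w x ∧
  ¬ (avoidG Γ (Γ.neighborSet x ∩ Γ.neighborSet y ∩ Γ.neighborSet z)).Reachable w y ∧
  ¬ (avoidG Γ (Γ.neighborSet x ∩ Γ.neighborSet y ∩ Γ.neighborSet z)).Reachable w z

open scoped commutatorElement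

/-!
`ρ = [R_x^y, R_x^z]` sends `x ↦ x·[y, z]` and fixes every other generator. Such a map commutes
with `π = π^v_C` as soon as `π` treats `[y, z]` the way it treats `x`: fixing it if `x ∉ C`,
conjugating it by `v` if `x ∈ C`. So if `ρ` and `π` do not commute, then `[y, z] ≠ 1` (hence
`y, z` are non-adjacent and of order `≠ 1`), `o(v) ≠ 1`, one of `x, y, z` lies in `C`, and if
`x ∈ C` then `y` or `z` lies outside `C ∪ st(v)`. Together with `lk(x) ⊆ st(y) ∩ st(z)` and the
fact that `C` is a union of components of `Γ \ st(v)`, this forces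
`lk(x) ⊆ lk(v) ∩ lk(y) ∩ lk(z)`: `x` is isolated in `Γ \ (lk(v) ∩ lk(y) ∩ lk(z))`.

For the group, one of `v, y` (say `v`) is not adjacent to `z`; then `⟨v, y, z⟩` maps to a free
product `A ∗ B` of abelian groups with `v, y ↦ A` and `z ↦ B`, where normal forms show that no
powers of the images of `yz` and `vz` commute.
-/

namespace Monoid.CoprodI

variable {ι : Type*} {M : ι → Type*} [∀ i, Monoid (M i)] {i j : ι}

def Word.interleave (hij : i ≠ j) {c : M j} (hc : c ≠ 1) (L : List (M i))
    (hL : ∀ a ∈ L, a ≠ 1) : Word M where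
  toList := L.flatMap fun a => [⟨i, a⟩, ⟨j, c⟩]
  ne_one := by
    simp only [List.mem_flatMap, List.mem_cons, List.not_mem_nil, or_false]
    rintro _ ⟨a, ha, rfl | rfl⟩
    exacts [hL a ha, hc]
  chain_ne := by
    induction L with
    | nil => exact List.isChain_nil
    | cons a L ih =>
      cases L with
      | nil => simpa using hij
      | cons b L => simpa [hij, hij.symm] using ih (fun a ha => hL a (List.mem_cons_of_mem _ ha))

theorem Word.prod_interleave (hij : i ≠ j) {c : M j} (hc : c ≠ 1) (L : List (M i))
    (hL : ∀ a ∈ L, a ≠ 1) :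
    (Word.interleave hij hc L hL).prod = (L.map fun a => of a * of c).prod := by
  induction L with
  | nil => rfl
  | cons a L ih =>
    simp only [Word.prod, Word.interleave, List.flatMap_cons, List.map_append,
      List.prod_append] at ih ⊢
    simp [ih fun a ha => hL a (List.mem_cons_of_mem _ ha), mul_assoc]

theorem not_commute_pow_of_mul_of [DecidableEq ι] [∀ i, DecidableEq (M i)]
    (hij : i ≠ j) {a b : M i} {c : M j} (ha : a ≠ 1) (hb : b ≠ 1) (hc : c ≠ 1) (hab : a ≠ b)
    {m n : ℕ} (hm : m ≠ 0) (hn : n ≠ 0) :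
    ¬ Commute ((of a * of c) ^ m) ((of b * of c) ^ n) := by
  intro h
  let w (p q : M i) (hp : p ≠ 1) (hq : q ≠ 1) (k l : ℕ) : Word M :=
    Word.interleave hij hc (List.replicate k p ++ List.replicate l q) fun x hx => by
      rcases List.mem_append.mp hx with hx | hx <;> rw [List.eq_of_mem_replicate hx] <;> assumption
  have hw_prod (p q : M i) (hp : p ≠ 1) (hq : q ≠ 1) (k l : ℕ) :
      (w p q hp hq k l).prod = (of p * of c) ^ k * (of q * of c) ^ l := by
    simp [w, Word.prod_interleave, List.prod_replicate]
  have hw : w a b ha hb m n = w b a hb ha n m :=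
    Word.equiv.symm.injective <| by simp only [Word.equiv, Equiv.coe_fn_symm_mk, hw_prod, h.eq]
  -- the two reduced words start with the letters `a` and `b`
  obtain ⟨m, rfl⟩ := Nat.exists_eq_succ_of_ne_zero hm
  obtain ⟨n, rfl⟩ := Nat.exists_eq_succ_of_ne_zero hn
  simp [w, Word.interleave, List.replicate_succ, hab] at hw

end Monoid.CoprodI

theorem VirtuallyAbelian.exists_commute_pow {G : Type*} [Group G] (h : VirtuallyAbelian G)
    (a b : G) : ∃ m n : ℕ, m ≠ 0 ∧ n ≠ 0 ∧ Commute (a ^ m) (b ^ n) := by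
  obtain ⟨H, hH, hcomm⟩ := h
  obtain ⟨m, hm, -, ham⟩ := Subgroup.exists_pow_mem_of_index_ne_zero hH.index_ne_zero a
  obtain ⟨n, hn, -, hbn⟩ := Subgroup.exists_pow_mem_of_index_ne_zero hH.index_ne_zero b
  exact ⟨m, n, hm.ne', hn.ne', hcomm _ ham _ hbn⟩

section GraphProduct

variable {V : Type*} {Γ : SimpleGraph V} {o : V → ℕ}

theorem mk_eq_one_of_mem_gpRels {r : FreeGroup V} (hr : r ∈ gpRels Γ o) :
    PresentedGroup.mk (gpRels Γ o) r = 1 :=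
  (QuotientGroup.eq_one_iff _).mpr (Subgroup.subset_normalClosure hr)

theorem gen_commute_of_adj {u w : V} (h : Γ.Adj u w) : Commute (gen Γ o u) (gen Γ o w) := by
  have := mk_eq_one_of_mem_gpRels (o := o) (Or.inl ⟨u, w, h, rfl⟩)
  simp only [map_mul, map_inv] at this
  exact commutatorElement_eq_one_iff_commute.mp this

theorem gen_pow_eq_one (w : V) : gen Γ o w ^ o w = 1 := by
  by_cases h : o w = 0
  · rw [h, pow_zero]
  · have := mk_eq_one_of_mem_gpRels (Γ := Γ) (Or.inr ⟨w, h, rfl⟩)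
    rwa [map_pow] at this

theorem gen_eq_one {w : V} (h : o w = 1) : gen Γ o w = 1 := by
  simpa [h] using gen_pow_eq_one (Γ := Γ) (o := o) w

theorem GP.mulAut_ext {φ ψ : MulAut (GP Γ o)} (h : ∀ w, φ (gen Γ o w) = ψ (gen Γ o w)) :
    φ = ψ :=
  MulEquiv.toMonoidHom_injective (PresentedGroup.ext h)

def GP.lift {Q : Type*} [Group Q] (f : V → Q) (hf : ∀ u w, Γ.Adj u w → Commute (f u) (f w))
    (ho : ∀ w, f w ^ o w = 1) : GP Γ o →* Q :=
  PresentedGroup.toGroup (f := f) <| by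
    rintro r (⟨u, w, huw, rfl⟩ | ⟨w, -, rfl⟩)
    · simpa [← commutatorElement_def] using (hf u w huw).commutator_eq
    · simpa using ho w

@[simp]
theorem GP.lift_gen {Q : Type*} [Group Q] (f : V → Q)
    (hf : ∀ u w, Γ.Adj u w → Commute (f u) (f w)) (ho : ∀ w, f w ^ o w = 1) (w : V) :
    GP.lift f hf ho (gen Γ o w) = f w :=
  PresentedGroup.toGroup.of _

open Monoid in
theorem GP.exists_hom_coprodI {ι K : Type*} [CommGroup K] (S : Set V) (c : V → ι) (e : V → K)
    (hc : ∀ u ∈ S, ∀ w ∈ S, Γ.Adj u w → c u = c w) (he : ∀ w ∈ S, e w ^ o w = 1) :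
    ∃ F : GP Γ o →* CoprodI (fun _ : ι => K),
      ∀ w ∈ S, F (gen Γ o w) = CoprodI.of (M := fun _ => K) (i := c w) (e w) := by
  classical
  let f (w : V) : CoprodI (fun _ : ι => K) := CoprodI.of (i := c w) (if w ∈ S then e w else 1)
  have hf (u w : V) (huw : Γ.Adj u w) : Commute (f u) (f w) := by
    by_cases hu : u ∈ S
    · by_cases hw : w ∈ S
      · simp only [f, hc u hu w hw huw]
        exact (Commute.all _ _).map _
      · simp [f, hw]
    · simp [f, hu]
  have ho (w : V) : f w ^ o w = 1 := by
    by_cases hw : w ∈ S <;> simp [f, hw, ← map_pow, he]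
  exact ⟨GP.lift f hf ho, fun w hw => by simp [f, hw]⟩

open Monoid in
theorem GP.not_virtuallyAbelian_of_gen_mem {w₀ w₁ w₂ : V} (h01 : w₀ ≠ w₁) (h02 : w₀ ≠ w₂)
    (h12 : w₁ ≠ w₂) (ha02 : ¬ Γ.Adj w₀ w₂) (ha12 : ¬ Γ.Adj w₁ w₂)
    (ho0 : o w₀ ≠ 1) (ho1 : o w₁ ≠ 1) (ho2 : o w₂ ≠ 1) {H : Subgroup (GP Γ o)}
    (hm0 : gen Γ o w₀ ∈ H) (hm1 : gen Γ o w₁ ∈ H) (hm2 : gen Γ o w₂ ∈ H) :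
    ¬ VirtuallyAbelian H := by
  classical
  intro hVA
  let e (w : V) : Multiplicative (∀ w, ZMod (o w)) := Multiplicative.ofAdd (Pi.single w 1)
  have he_pow (w : V) : e w ^ o w = 1 := by
    rw [← ofAdd_nsmul, ← Pi.single_smul, nsmul_eq_mul, mul_one, ZMod.natCast_self,
      Pi.single_zero, ofAdd_zero]
  have he_ne_one {w : V} (hw : o w ≠ 1) : e w ≠ 1 := by
    have : Nontrivial (ZMod (o w)) := ZMod.nontrivial_iff.mpr hw
    simp [e, ← ofAdd_zero]
  have he01 : e w₁ ≠ e w₀ := fun h => by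
    have : Nontrivial (ZMod (o w₁)) := ZMod.nontrivial_iff.mpr ho1
    simpa [Pi.single_apply, h01.symm] using congrFun (Multiplicative.ofAdd.injective h) w₁
  -- `w₀, w₁` go to one free factor and `w₂` to the other
  obtain ⟨F, hF⟩ := GP.exists_hom_coprodI (Γ := Γ) {w₀, w₁, w₂} (fun w => decide (w = w₂)) e
    (by
      rintro u hu w hw huw
      simp only [Set.mem_insert_iff, Set.mem_singleton_iff] at hu hw
      rcases hu with rfl | rfl | rfl <;> rcases hw with rfl | rfl | rfl <;> simp_all [huw.symm])
    (fun w _ => he_pow w)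
  obtain ⟨m, n, hm, hn, hcomm⟩ :=
    hVA.exists_commute_pow ⟨_, H.mul_mem hm1 hm2⟩ ⟨_, H.mul_mem hm0 hm2⟩
  have := (hcomm.map H.subtype).map F
  simp only [map_pow, map_mul, Subgroup.subtype_apply, hF, Set.mem_insert_iff,
    Set.mem_singleton_iff, true_or, or_true, h12, h02, decide_false, decide_true] at this
  exact CoprodI.not_commute_pow_of_mul_of Bool.false_ne_true (he_ne_one ho1) (he_ne_one ho0)
    (he_ne_one ho2) he01 hm hn this

variable {x y z v : V} {k l : ℤ} {C : Set V} {α β π ρ : MulAut (GP Γ o)}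

theorem GP.not_virtuallyAbelian_closure_triple (hyv : y ≠ v) (hzv : z ≠ v)
    (hyz : y ≠ z) (hnyz : ¬ Γ.Adj y z)
    (hv : ¬ (Γ.Adj v y ∧ Γ.Adj v z)) (hov : o v ≠ 1) (hoy : o y ≠ 1) (hoz : o z ≠ 1) :
    ¬ VirtuallyAbelian (Subgroup.closure {gen Γ o v, gen Γ o y, gen Γ o z}) := by
  have mem {w : V} (hw : w = v ∨ w = y ∨ w = z) :
      gen Γ o w ∈ Subgroup.closure {gen Γ o v, gen Γ o y, gen Γ o z} := by
    apply Subgroup.subset_closure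
    rcases hw with rfl | rfl | rfl <;> simp
  by_cases hvy : Γ.Adj v y
  · exact GP.not_virtuallyAbelian_of_gen_mem hyv.symm hzv.symm hyz (fun hvz => hv ⟨hvy, hvz⟩)
      hnyz hov hoy hoz (mem (by simp)) (mem (by simp)) (mem (by simp))
  · exact GP.not_virtuallyAbelian_of_gen_mem hzv.symm hyv.symm hyz.symm hvy (hnyz ∘ Γ.adj_symm)
      hov hoz hoy (mem (by simp)) (mem (by simp)) (mem (by simp))

theorem IsUnionComponents.notMem_of_mem_stS (hC : IsUnionComponents Γ v C) {w : V}
    (hw : w ∈ stS Γ v) : w ∉ C :=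
  fun hwC => (Set.eq_empty_iff_forall_notMem.mp hC.1) w ⟨hwC, hw⟩

theorem IsUnionComponents.mem_or_mem_stS_of_adj (hC : IsUnionComponents Γ v C) {a b : V}
    (hab : Γ.Adj a b) (ha : a ∈ C) : b ∈ C ∨ b ∈ stS Γ v :=
  or_iff_not_imp_right.mpr (hC.2 a b hab ha)

theorem neighborSet_subset_inter_of_subset_stS (hy : Γ.neighborSet x ⊆ stS Γ y)
    (hz : Γ.neighborSet x ⊆ stS Γ z) (hyz : y ≠ z) (hnyz : ¬ Γ.Adj y z) :
    Γ.neighborSet x ⊆ Γ.neighborSet y ∩ Γ.neighborSet z := by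
  intro a ha
  rcases hy ha with rfl | hya
  · rcases hz ha with rfl | hza
    exacts [absurd rfl hyz, absurd (Γ.adj_symm hza) hnyz]
  · rcases hz ha with rfl | hza
    exacts [absurd hya hnyz, ⟨hya, hza⟩]

theorem not_reachable_avoidG_of_neighborSet_subset {S : Set V} {u : V}
    (hS : Γ.neighborSet x ⊆ S) (hxu : x ≠ u) : ¬ (avoidG Γ S).Reachable x u := by
  rintro ⟨_ | ⟨hadj, -⟩⟩
  exacts [hxu rfl, hadj.2.2 (hS hadj.1)]

theorem IsUnionComponents.neighborSet_subset_neighborSet (hC : IsUnionComponents Γ v C)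
    (hxv : x ≠ v)
    (hlk : Γ.neighborSet x ⊆ Γ.neighborSet y ∩ Γ.neighborSet z) (hxyz : x ∈ C ∨ y ∈ C ∨ z ∈ C)
    (hx : x ∈ C → ¬ ((y ∈ C ∨ y ∈ stS Γ v) ∧ (z ∈ C ∨ z ∈ stS Γ v))) :
    Γ.neighborSet x ⊆ Γ.neighborSet v := by
  have hxv' : x ∉ stS Γ v := by
    rintro (rfl | hvx)
    · exact hxv rfl
    obtain ⟨hyv, hzv⟩ := hlk (Γ.adj_symm hvx)
    rcases hxyz with h | h | h
    exacts [hC.notMem_of_mem_stS (Or.inr hvx) h, hC.notMem_of_mem_stS (Or.inr (Γ.adj_symm hyv)) h,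
      hC.notMem_of_mem_stS (Or.inr (Γ.adj_symm hzv)) h]
  intro a hxa
  obtain ⟨hya, hza⟩ := hlk hxa
  by_contra hva
  have hav : a ∉ stS Γ v := by
    rintro (rfl | hva')
    exacts [hxv' (Or.inr (Γ.adj_symm hxa)), hva hva']
  by_cases hxC : x ∈ C
  · have haC : a ∈ C := hC.2 x a hxa hxC hav
    exact hx hxC ⟨hC.mem_or_mem_stS_of_adj (Γ.adj_symm hya) haC,
      hC.mem_or_mem_stS_of_adj (Γ.adj_symm hza) haC⟩
  · have haC : a ∉ C := fun haC => hxC (hC.2 a x (Γ.adj_symm hxa) haC hxv')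
    rcases hxyz with h | h | h
    exacts [hxC h, haC (hC.2 y a hya h hav), haC (hC.2 z a hza h hav)]

theorem IsTransv.inv_apply_of_ne (hα : IsTransv Γ o α x y k) {w : V} (hw : w ≠ x) :
    α⁻¹ (gen Γ o w) = gen Γ o w :=
  α.injective <| by rw [MulAut.apply_inv_self, hα.2 w hw]

theorem IsTransv.inv_apply_self (hα : IsTransv Γ o α x y k) (hxy : x ≠ y) :
    α⁻¹ (gen Γ o x) = gen Γ o x * (gen Γ o y ^ k)⁻¹ :=
  α.injective <| by
    rw [MulAut.apply_inv_self, map_mul, map_inv, map_zpow, hα.1, hα.2 y hxy.symm,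
      mul_inv_cancel_right]

theorem IsTransv.commutatorElement_apply_of_ne (hα : IsTransv Γ o α x y k)
    (hβ : IsTransv Γ o β x z l) {w : V} (hw : w ≠ x) : ⁅α, β⁆ (gen Γ o w) = gen Γ o w := by
  simp only [commutatorElement_def, MulAut.mul_apply, hβ.inv_apply_of_ne hw,
    hα.inv_apply_of_ne hw, hβ.2 w hw, hα.2 w hw]

theorem IsTransv.commutatorElement_apply_self (hα : IsTransv Γ o α x y k)
    (hβ : IsTransv Γ o β x z l) (hxy : x ≠ y) (hxz : x ≠ z) :
    ⁅α, β⁆ (gen Γ o x) = gen Γ o x * ⁅gen Γ o y ^ k, gen Γ o z ^ l⁆ := by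
  simp only [commutatorElement_def, MulAut.mul_apply, map_mul, map_inv, map_zpow,
    hβ.inv_apply_self hxz, hα.inv_apply_self hxy, hα.inv_apply_of_ne hxz.symm,
    hα.1, hβ.1, hα.2 y hxy.symm, hα.2 z hxz.symm, hβ.2 y hxy.symm, hβ.2 z hxz.symm, mul_assoc]

theorem IsTransv.commutatorElement_eq_one (hα : IsTransv Γ o α x y k)
    (hβ : IsTransv Γ o β x z l) (hxy : x ≠ y) (hxz : x ≠ z)
    (hyz : Commute (gen Γ o y) (gen Γ o z)) : ⁅α, β⁆ = 1 := by
  refine GP.mulAut_ext fun w => ?_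
  rcases eq_or_ne w x with rfl | hw
  · rw [hα.commutatorElement_apply_self hβ hxy hxz,
      commutatorElement_eq_one_iff_commute.mpr (hyz.zpow_zpow k l), mul_one, MulAut.one_apply]
  · exact hα.commutatorElement_apply_of_ne hβ hw

theorem IsPC.eq_one (hπ : IsPC Γ o π v C) (hv : gen Γ o v = 1) : π = 1 := by
  refine GP.mulAut_ext fun w => ?_
  by_cases hw : w ∈ C
  · rw [hπ.1 w hw, hv, one_mul, inv_one, mul_one, MulAut.one_apply]
  · exact hπ.2 w hw

theorem IsPC.apply_eq_conj (hπ : IsPC Γ o π v C) (hC : IsUnionComponents Γ v C) {w : V}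
    (hw : w ∈ C ∨ w ∈ stS Γ v) : π (gen Γ o w) = MulAut.conj (gen Γ o v) (gen Γ o w) := by
  rw [MulAut.conj_apply]
  rcases hw with hw | rfl | hvw
  · exact hπ.1 w hw
  · rw [hπ.2 w (hC.notMem_of_mem_stS (Set.mem_insert w _)), mul_inv_cancel_right]
  · rw [hπ.2 w (hC.notMem_of_mem_stS (Or.inr hvw)), (gen_commute_of_adj hvw).eq, mul_inv_cancel_right]

theorem IsPC.commute_of_apply (hπ : IsPC Γ o π v C) {g : GP Γ o}
    (hρx : ρ (gen Γ o x) = gen Γ o x * g) (hρ : ∀ w ≠ x, ρ (gen Γ o w) = gen Γ o w)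
    (hxv : x ≠ v) (hin : x ∈ C → π g = MulAut.conj (gen Γ o v) g) (hout : x ∉ C → π g = g) :
    Commute ρ π := by
  refine GP.mulAut_ext fun w => ?_
  simp only [MulAut.mul_apply]
  rcases eq_or_ne w x with rfl | hw
  · by_cases hwC : w ∈ C
    · simp only [hπ.1 w hwC, hρx, map_mul, map_inv, hin hwC, MulAut.conj_apply, hρ v hxv.symm]
      group
    · simp only [hπ.2 w hwC, hρx, map_mul, hout hwC]
  · by_cases hwC : w ∈ C
    · simp only [hπ.1 w hwC, hρ w hw, map_mul, map_inv, hρ v hxv.symm]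
    · simp only [hπ.2 w hwC, hρ w hw]

theorem IsTransv.commute_isPC_of_notMem (hα : IsTransv Γ o α x y k)
    (hβ : IsTransv Γ o β x z l) (hπ : IsPC Γ o π v C) (hxy : x ≠ y) (hxz : x ≠ z) (hxv : x ≠ v)
    (hx : x ∉ C) (hy : y ∉ C) (hz : z ∉ C) : Commute ⁅α, β⁆ π :=
  hπ.commute_of_apply (hα.commutatorElement_apply_self hβ hxy hxz)
    (fun _ hw => hα.commutatorElement_apply_of_ne hβ hw) hxv (absurd · hx)
    fun _ => by simp only [map_commutatorElement, map_zpow, hπ.2 y hy, hπ.2 z hz]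

theorem IsTransv.commute_isPC_of_mem (hα : IsTransv Γ o α x y k)
    (hβ : IsTransv Γ o β x z l) (hπ : IsPC Γ o π v C) (hC : IsUnionComponents Γ v C)
    (hxy : x ≠ y) (hxz : x ≠ z) (hxv : x ≠ v)
    (hx : x ∈ C) (hy : y ∈ C ∨ y ∈ stS Γ v) (hz : z ∈ C ∨ z ∈ stS Γ v) : Commute ⁅α, β⁆ π :=
  hπ.commute_of_apply (hα.commutatorElement_apply_self hβ hxy hxz)
    (fun _ hw => hα.commutatorElement_apply_of_ne hβ hw) hxv
    (fun _ => by simp only [map_commutatorElement, map_zpow, hπ.apply_eq_conj hC hy,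
      hπ.apply_eq_conj hC hz])
    (absurd hx)

end GraphProduct

theorem comm_transvection_and_pc_not_commute_gives_STIL_general (Γ : SimpleGraph V) (o : V → ℕ)
    (x y z v : V)
    (hxy : x ≠ y) (hxz : x ≠ z) (hxv : x ≠ v) (hyz : y ≠ z) (hyv : y ≠ v) (hzv : z ≠ v)
    (hdy : Γ.neighborSet x ⊆ stS Γ y) (hdz : Γ.neighborSet x ⊆ stS Γ z)
    (α β π : MulAut (GP Γ o))
    (hα : IsTransv Γ o α x y 1) (hβ : IsTransv Γ o β x z 1)
    (C : Set V) (hUC : IsUnionComponents Γ v C) (hπ : IsPC Γ o π v C)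
    (hnc : ⁅⁅α, β⁆, π⁆ ∉ (MulAut.conj : GP Γ o →* MulAut (GP Γ o)).range) :
    IsSTIL Γ o v y z x := by
  have hne : ¬ Commute ⁅α, β⁆ π := fun h =>
    hnc ⟨1, (map_one _).trans (commutatorElement_eq_one_iff_commute.mpr h).symm⟩
  have hnyz : ¬ Commute (gen Γ o y) (gen Γ o z) := fun h =>
    hne (hα.commutatorElement_eq_one hβ hxy hxz h ▸ Commute.one_left π)
  have hxyz : x ∈ C ∨ y ∈ C ∨ z ∈ C := by
    by_contra! h
    exact hne (hα.commute_isPC_of_notMem hβ hπ hxy hxz hxv h.1 h.2.1 h.2.2)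
  have hx : x ∈ C → ¬ ((y ∈ C ∨ y ∈ stS Γ v) ∧ (z ∈ C ∨ z ∈ stS Γ v)) := fun hx ⟨hy, hz⟩ =>
    hne (hα.commute_isPC_of_mem hβ hπ hUC hxy hxz hxv hx hy hz)
  have hadj : ¬ Γ.Adj y z := hnyz ∘ gen_commute_of_adj
  have hlk := neighborSet_subset_inter_of_subset_stS hdy hdz hyz hadj
  have hlkv := hUC.neighborSet_subset_neighborSet hxv hlk hxyz hx
  have hS : Γ.neighborSet x ⊆ Γ.neighborSet v ∩ Γ.neighborSet y ∩ Γ.neighborSet z :=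
    fun a ha => ⟨⟨hlkv ha, (hlk ha).1⟩, (hlk ha).2⟩
  have hv : ¬ (Γ.Adj v y ∧ Γ.Adj v z) := fun ⟨hvy, hvz⟩ =>
    hx (hxyz.resolve_right (not_or_intro (hUC.notMem_of_mem_stS (Or.inr hvy))
      (hUC.notMem_of_mem_stS (Or.inr hvz)))) ⟨Or.inr (Or.inr hvy), Or.inr (Or.inr hvz)⟩
  refine ⟨GP.not_virtuallyAbelian_closure_triple hyv hzv hyz hadj hv
      (fun h => hne (hπ.eq_one (gen_eq_one h) ▸ Commute.one_right _))
      (fun h => hnyz (gen_eq_one h ▸ Commute.one_left _))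
      (fun h => hnyz (gen_eq_one h ▸ Commute.one_right _)),
    fun hxS => Γ.irrefl (hlkv (Γ.adj_symm hxS.1.1)),
    not_reachable_avoidG_of_neighborSet_subset hS hxv,
    not_reachable_avoidG_of_neighborSet_subset hS hxy,
    not_reachable_avoidG_of_neighborSet_subset hS hxz⟩

/-- If `x, y, z, v` are distinct, `x ≤_∞ y`, `x ≤_∞ z`, and the commutator transvection
`R_x^{[y,z]} = [R_x^y, R_x^z]` does not commute with the partial conjugation `π^v_C` in
`Out(𝒢)`, then `(v, y, z | x)` is a STIL. -/
theorem comm_transvection_and_pc_not_commute_gives_STIL (Γ : SimpleGraph V) (o : V → ℕ)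
    (x y z v : V)
    (hxy : x ≠ y) (hxz : x ≠ z) (hxv : x ≠ v) (hyz : y ≠ z) (hyv : y ≠ v) (hzv : z ≠ v)
    (hx : o x = 0)
    (hdy : Γ.neighborSet x ⊆ stS Γ y) (hdz : Γ.neighborSet x ⊆ stS Γ z)
    (α β π : MulAut (GP Γ o))
    (hα : IsTransv Γ o α x y 1) (hβ : IsTransv Γ o β x z 1)
    (C : Set V) (hUC : IsUnionComponents Γ v C) (hπ : IsPC Γ o π v C)
    (hnc : ⁅⁅α, β⁆, π⁆ ∉ (MulAut.conj : GP Γ o →* MulAut (GP Γ o)).range) :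
    IsSTIL Γ o v y z x :=
  comm_transvection_and_pc_not_commute_gives_STIL_general Γ o x y z v hxy hxz hxv hyz hyv hzv hdy
    hdz α β π hα hβ C hUC hπ hnc
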